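/- arXiv:2311.13103 — 5 statements merged into one kernel-verified Lean document; each statement's English description precedes it below -/
import Mathlib

section
/- Let E ⊆ ℝ^ℓ be a convex set contained in an affine hyperplane {v : u·v = 1} for some linear functional u on ℝ^ℓ, and let ē ∈ ℝ^ℓ. Let e : Fin n → ℝ^ℓ be such that every e y is an extreme point of E, and let p : Fin n → ℝ satisfy p y > 0 for all y and ∑_y p y • e y = ē. Then the measurement f : Fin n → ℝ^ℓ defined by f y = p y • e y is an extreme point of the convex set M_n(E,ē) of n-outcome measurements if and only if the family (e y)_{y : Fin n} is linearly independent over ℝ. -/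
open Matrix Finset

/-- The set of `n`-outcome measurements with normalized effects in `E` and unit
effect `ebar`: families `f` such that each `f y` is a nonnegative multiple of a
normalized effect and `∑ y, f y = ebar`. -/
def Measurements {ℓ : ℕ} (n : ℕ) (E : Set (Fin ℓ → ℝ)) (ebar : Fin ℓ → ℝ) :
    Set (Fin n → Fin ℓ → ℝ) :=
  {f | (∀ y, ∃ t : ℝ, 0 ≤ t ∧ ∃ c ∈ E, f y = t • c) ∧ ∑ y, f y = ebar}

/-!
Along any linear relation `∑ d y • e y = 0` the measurement `f y = p y • e y` can be perturbed
to `(p y ± ε d y) • e y` inside the set of measurements, so extremality forces `d = 0`.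
Conversely, since `E` lies in the hyperplane `u = 1`, a nonnegative combination of effects that
lands on the ray through an extreme point `e y` of `E` consists of multiples of `e y` only;
so any measurement on a segment through `f` has its components on the rays `ℝ≥0 • e y`, and
linear independence pins down their coefficients to `p y`.
-/

section

variable {𝕜 V : Type*} [Field 𝕜] [LinearOrder 𝕜] [IsStrictOrderedRing 𝕜]
  [AddCommGroup V] [Module 𝕜 V]

theorem eq_zero_of_add_mem_of_sub_mem_of_mem_extremePoints {S : Set V} {x v : V}
    (hx : x ∈ S.extremePoints 𝕜) (hadd : x + v ∈ S) (hsub : x - v ∈ S) : v = 0 := by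
  have hmid : x ∈ openSegment 𝕜 (x + v) (x - v) :=
    ⟨1 / 2, 1 / 2, by norm_num, by norm_num, by norm_num, by
      rw [← smul_add, add_add_sub_cancel, ← two_smul 𝕜 x, smul_smul]; norm_num⟩
  simpa using hx.2 hadd hsub hmid

theorem smul_eq_smul_of_add_eq_smul_of_mem_extremePoints {E : Set V} (u : V →ₗ[𝕜] 𝕜)
    (hu : ∀ v ∈ E, u v = 1) {c d e : V} (hc : c ∈ E) (hd : d ∈ E) (he : e ∈ E.extremePoints 𝕜)
    {s t p : 𝕜} (hs : 0 ≤ s) (ht : 0 ≤ t) (h : s • c + t • d = p • e) : s • c = s • e := by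
  obtain rfl : s + t = p := by simpa [hu c hc, hu d hd, hu e he.1] using congrArg u h
  rcases hs.eq_or_lt with rfl | hs
  · simp
  rcases ht.eq_or_lt with rfl | ht
  · simpa using h
  have hseg : e ∈ openSegment 𝕜 c d := by
    refine ⟨s / (s + t), t / (s + t), by positivity, by positivity, by field_simp, ?_⟩
    rw [div_eq_inv_mul, div_eq_inv_mul, mul_smul, mul_smul, ← smul_add, h, inv_smul_smul₀]
    positivity
  rw [he.2 hc hd hseg]

end

theorem exists_pos_forall_abs_mul_lt {ι : Type*} [Finite ι] {p : ι → ℝ} (hp : ∀ i, 0 < p i)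
    (d : ι → ℝ) : ∃ ε > 0, ∀ i, |ε * d i| < p i := by
  have hsmall : ∀ᶠ ε in nhdsWithin (0 : ℝ) (Set.Ioi 0), ∀ i, |ε * d i| < p i :=
    nhdsWithin_le_nhds <| Filter.eventually_all.2 fun i =>
      ((continuous_id.mul continuous_const).abs.tendsto' 0 0 (by simp)).eventually
        (gt_mem_nhds (hp i))
  exact (eventually_mem_nhdsWithin.and hsmall).exists

namespace Measurements

variable {ℓ n : ℕ} {E : Set (Fin ℓ → ℝ)} {ebar : Fin ℓ → ℝ} {e : Fin n → Fin ℓ → ℝ}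

theorem smul_mem {w : Fin n → ℝ} (hw : ∀ y, 0 ≤ w y) (he : ∀ y, e y ∈ E)
    (hsum : ∑ y, w y • e y = ebar) : (fun y => w y • e y) ∈ Measurements n E ebar :=
  ⟨fun y => ⟨w y, hw y, e y, he y, rfl⟩, hsum⟩

theorem smul_add_smul_mem {w d : Fin n → ℝ} (hwd : ∀ y, 0 ≤ w y + d y) (he : ∀ y, e y ∈ E)
    (hw : ∑ y, w y • e y = ebar) (hd : ∑ y, d y • e y = 0) :
    (fun y => w y • e y) + (fun y => d y • e y) ∈ Measurements n E ebar := by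
  have hsum : ∑ y, (w y + d y) • e y = ebar := by
    simp only [add_smul, sum_add_distrib, hw, hd, add_zero]
  convert smul_mem hwd he hsum using 1
  ext1 y
  simp only [Pi.add_apply, add_smul]

theorem linearIndependent_of_smul_mem_extremePoints {p : Fin n → ℝ} (hp : ∀ y, 0 < p y)
    (he : ∀ y, e y ∈ E) (he₀ : ∀ y, e y ≠ 0) (hsum : ∑ y, p y • e y = ebar)
    (hext : (fun y => p y • e y) ∈ (Measurements n E ebar).extremePoints ℝ) :
    LinearIndependent ℝ e := by
  refine Fintype.linearIndependent_iff.2 fun d hd i => ?_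
  obtain ⟨ε, hε, hεd⟩ := exists_pos_forall_abs_mul_lt hp d
  have hεd' : ∑ y, (ε * d y) • e y = 0 := by simp only [mul_smul, ← smul_sum, hd, smul_zero]
  have hadd := smul_add_smul_mem (fun y => by linarith [(abs_lt.1 (hεd y)).1]) he hsum hεd'
  have hsub := smul_add_smul_mem (d := fun y => -(ε * d y))
    (fun y => by linarith [(abs_lt.1 (hεd y)).2]) he hsum (by simp [neg_smul, hεd'])
  have hzero := eq_zero_of_add_mem_of_sub_mem_of_mem_extremePoints hext hadd
    (by simpa only [neg_smul, ← Pi.neg_def, ← sub_eq_add_neg] using hsub)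
  simpa [hε.ne', he₀ i] using congrFun hzero i

theorem smul_mem_extremePoints_of_linearIndependent (u : (Fin ℓ → ℝ) →ₗ[ℝ] ℝ)
    (hu : ∀ v ∈ E, u v = 1) (he : ∀ y, e y ∈ E.extremePoints ℝ) (hli : LinearIndependent ℝ e)
    {p : Fin n → ℝ} (hp : ∀ y, 0 ≤ p y) (hsum : ∑ y, p y • e y = ebar) :
    (fun y => p y • e y) ∈ (Measurements n E ebar).extremePoints ℝ := by
  refine ⟨smul_mem hp (fun y => (he y).1) hsum, ?_⟩
  rintro g hg h hh ⟨a, b, ha, hb, -, hgh⟩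
  have hray : ∀ y, ∃ q : ℝ, g y = q • e y := by
    intro y
    obtain ⟨s, hs, c, hc, hgy⟩ := hg.1 y
    obtain ⟨t, ht, d, hd, hhy⟩ := hh.1 y
    have hy : (a * s) • c + (b * t) • d = p y • e y := by
      simpa only [Pi.add_apply, Pi.smul_apply, hgy, hhy, smul_smul] using congrFun hgh y
    have hce := smul_eq_smul_of_add_eq_smul_of_mem_extremePoints u hu hc hd (he y)
      (by positivity) (by positivity) hy
    rw [mul_smul, mul_smul] at hce
    exact ⟨s, hgy.trans (smul_right_injective _ ha.ne' hce)⟩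
  choose q hq using hray
  have hqp : ∀ y, q y = p y := by
    refine Fintype.linearIndependent_iffₛ.1 hli q p ?_
    simp only [← hq, hg.2, hsum]
  exact funext fun y => by rw [hq, hqp]

end Measurements

theorem extremal_measurement_iff_linearIndependent_general
    {ℓ n : ℕ} (E : Set (Fin ℓ → ℝ))
    (u : (Fin ℓ → ℝ) →ₗ[ℝ] ℝ) (hu : ∀ v ∈ E, u v = 1)
    (ebar : Fin ℓ → ℝ) (e : Fin n → Fin ℓ → ℝ)
    (he : ∀ y, e y ∈ Set.extremePoints ℝ E)
    (p : Fin n → ℝ) (hp : ∀ y, 0 < p y)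
    (hsum : ∑ y, p y • e y = ebar)
    (f : Fin n → Fin ℓ → ℝ) (hf : ∀ y, f y = p y • e y) :
    f ∈ Set.extremePoints ℝ (Measurements n E ebar) ↔ LinearIndependent ℝ e := by
  obtain rfl : f = fun y => p y • e y := funext hf
  have he₀ : ∀ y, e y ≠ 0 := fun y h0 => by simpa [h0] using hu _ (he y).1
  exact ⟨Measurements.linearIndependent_of_smul_mem_extremePoints hp (fun y => (he y).1) he₀ hsum,
    fun hli => Measurements.smul_mem_extremePoints_of_linearIndependent u hu he hli
      (fun y => (hp y).le) hsum⟩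

/-- a measurement whose effects are positive multiples of
extreme points of `E` is extremal iff the normalized effects are linearly
independent. -/
theorem extremal_measurement_iff_linearIndependent
    {ℓ n : ℕ} (E : Set (Fin ℓ → ℝ)) (hE : Convex ℝ E)
    (u : (Fin ℓ → ℝ) →ₗ[ℝ] ℝ) (hu : ∀ v ∈ E, u v = 1)
    (ebar : Fin ℓ → ℝ) (e : Fin n → Fin ℓ → ℝ)
    (he : ∀ y, e y ∈ Set.extremePoints ℝ E)
    (p : Fin n → ℝ) (hp : ∀ y, 0 < p y)
    (hsum : ∑ y, p y • e y = ebar)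
    (f : Fin n → Fin ℓ → ℝ) (hf : ∀ y, f y = p y • e y) :
    f ∈ Set.extremePoints ℝ (Measurements n E ebar) ↔ LinearIndependent ℝ e :=
  extremal_measurement_iff_linearIndependent_general E u hu ebar e he p hp hsum f hf
end

section
/- Let E ⊆ ℝ^ℓ be a convex set contained in an affine hyperplane {v : u·v = 1} for some linear functional u on ℝ^ℓ, and let ē ∈ ℝ^ℓ. If f : Fin n → ℝ^ℓ is an extreme point of M_n(E,ē) and there exist p : Fin n → ℝ and e : Fin n → ℝ^ℓ with p y > 0, e y an extreme point of E, and f y = p y • e y for all y, then the number of outcomes satisfies n ≤ ℓ. -/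
/-!
If the effects `f y` of a measurement satisfy a linear relation `∑ c y • f y = 0`, then rescaling
each effect by `1 ± ε c y` (for small `ε > 0`) gives two measurements with the same unit effect
whose midpoint is `f`. Extremality forces both to equal `f`, so every `c y • f y` vanishes. Since
each `f y = p y • e y` is nonzero (`u` takes the value `p y > 0` on it), the effects are linearly
independent in `Fin ℓ → ℝ`, and there are at most `ℓ` of them.
-/

open Matrix Finset

lemma exists_pos_forall_abs_mul_le_one {ι : Type*} [Fintype ι] (c : ι → ℝ) :
    ∃ ε > 0, ∀ i, |ε * c i| ≤ 1 := by
  have hsum : 0 ≤ ∑ i, |c i| := sum_nonneg fun _ _ => abs_nonneg _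
  refine ⟨(1 + ∑ i, |c i|)⁻¹, by positivity, fun i => ?_⟩
  have hci : |c i| ≤ ∑ j, |c j| := single_le_sum (f := fun j => |c j|)
    (fun _ _ => abs_nonneg _) (mem_univ i)
  rw [abs_mul, abs_inv, abs_of_pos (by positivity : (0 : ℝ) < 1 + ∑ i, |c i|), inv_mul_le_one₀
    (by positivity)]
  linarith

section Measurements

variable {ℓ n : ℕ} {E : Set (Fin ℓ → ℝ)} {ebar : Fin ℓ → ℝ} {f : Fin n → Fin ℓ → ℝ}

lemma smul_mem_measurements (hf : f ∈ Measurements n E ebar) {a : Fin n → ℝ}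
    (ha : ∀ y, 0 ≤ a y) (hsum : ∑ y, a y • f y = ebar) :
    (fun y => a y • f y) ∈ Measurements n E ebar := by
  refine ⟨fun y => ?_, hsum⟩
  obtain ⟨t, ht, c, hc, hfy⟩ := hf.1 y
  exact ⟨a y * t, mul_nonneg (ha y) ht, c, hc, by simp only [hfy, smul_smul]⟩

lemma smul_eq_zero_of_sum_smul_eq_zero
    (hext : f ∈ Set.extremePoints ℝ (Measurements n E ebar)) {c : Fin n → ℝ}
    (hc : ∑ y, c y • f y = 0) (y : Fin n) : c y • f y = 0 := by
  obtain ⟨ε, hε, hεc⟩ := exists_pos_forall_abs_mul_le_one c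
  have hperturb : ∀ s : ℝ, |s| = 1 →
      (fun y => (1 + s * (ε * c y)) • f y) ∈ Measurements n E ebar := by
    intro s hs
    refine smul_mem_measurements hext.1 (fun y => ?_) ?_
    · have : |s * (ε * c y)| ≤ 1 := by rw [abs_mul, hs, one_mul]; exact hεc y
      linarith [neg_abs_le (s * (ε * c y))]
    · simp only [add_smul, one_smul, sum_add_distrib, mul_smul, ← smul_sum, hc, smul_zero,
        add_zero, hext.1.2]
  have hmid : f ∈ openSegment ℝ (fun y => (1 + 1 * (ε * c y)) • f y)
      (fun y => (1 + -1 * (ε * c y)) • f y) := by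
    refine ⟨1 / 2, 1 / 2, by norm_num, by norm_num, by norm_num, funext fun y => ?_⟩
    simp only [Pi.add_apply, Pi.smul_apply, smul_smul, ← add_smul]
    ring_nf
    exact one_smul ℝ (f y)
  have hfixed := congrFun (hext.2 (hperturb 1 (by simp)) (hperturb (-1) (by simp)) hmid) y
  have hεcf : (ε * c y) • f y = 0 := by
    simpa only [one_mul, add_smul, one_smul, add_eq_left] using hfixed
  rwa [mul_smul, smul_eq_zero, or_iff_right hε.ne'] at hεcf

lemma linearIndependent_of_mem_extremePoints_measurements
    (hext : f ∈ Set.extremePoints ℝ (Measurements n E ebar)) (hf0 : ∀ y, f y ≠ 0) :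
    LinearIndependent ℝ f :=
  Fintype.linearIndependent_iff.2 fun _ hc y =>
    (smul_eq_zero.1 (smul_eq_zero_of_sum_smul_eq_zero hext hc y)).resolve_right (hf0 y)

end Measurements

theorem outcomes_le_linear_dimension_general
    {ℓ n : ℕ} (E : Set (Fin ℓ → ℝ))
    (u : (Fin ℓ → ℝ) →ₗ[ℝ] ℝ) (hu : ∀ v ∈ E, u v = 1)
    (ebar : Fin ℓ → ℝ) (f : Fin n → Fin ℓ → ℝ)
    (hext : f ∈ Set.extremePoints ℝ (Measurements n E ebar))
    (p : Fin n → ℝ) (e : Fin n → Fin ℓ → ℝ)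
    (hp : ∀ y, 0 < p y)
    (he : ∀ y, e y ∈ Set.extremePoints ℝ E)
    (hf : ∀ y, f y = p y • e y) :
    n ≤ ℓ := by
  have hf0 : ∀ y, f y ≠ 0 := fun y hy => by
    have hu0 := congrArg u hy
    rw [hf y, map_smul, hu _ (he y).1, smul_eq_mul, mul_one, map_zero] at hu0
    exact (hp y).ne' hu0
  simpa using (linearIndependent_of_mem_extremePoints_measurements hext hf0).fintype_card_le_finrank

/-- Davies' bound for GPTs: an extremal measurement whose
effects are positive multiples of extreme points of `E` has at most `ℓ`
outcomes, where `ℓ` is the linear dimension of the system. -/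
theorem outcomes_le_linear_dimension
    {ℓ n : ℕ} (E : Set (Fin ℓ → ℝ)) (hE : Convex ℝ E)
    (u : (Fin ℓ → ℝ) →ₗ[ℝ] ℝ) (hu : ∀ v ∈ E, u v = 1)
    (ebar : Fin ℓ → ℝ) (f : Fin n → Fin ℓ → ℝ)
    (hext : f ∈ Set.extremePoints ℝ (Measurements n E ebar))
    (p : Fin n → ℝ) (e : Fin n → Fin ℓ → ℝ)
    (hp : ∀ y, 0 < p y)
    (he : ∀ y, e y ∈ Set.extremePoints ℝ E)
    (hf : ∀ y, f y = p y • e y) :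
    n ≤ ℓ :=
  outcomes_le_linear_dimension_general E u hu ebar f hext p e hp he hf
end

section
/- Let m, n, d be positive integers and let p : Fin (m+1) → Fin n → ℝ be a row-stochastic matrix such that the last row p m is a convex combination of the rows p 0, …, p (m−1). Then p belongs to the classical polytope P_d^{(m+1)→n} if and only if the matrix p' : Fin m → Fin n → ℝ obtained from p by deleting the last row belongs to P_d^{m→n}. -/
open Finset

/-- Deterministic strategies of dimension `d`: 0/1 matrices with exactly one
entry `1` in each row and at most `d` nonzero columns, encoded by a function
`g : Fin m → Fin n` whose image has at most `d` elements. -/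
def detStrategies (m n d : ℕ) : Set (Fin m → Fin n → ℝ) :=
  {v | ∃ g : Fin m → Fin n, (Finset.univ.image g).card ≤ d ∧
        ∀ x y, v x y = if g x = y then 1 else 0}

/-- The classical polytope `P_d^{m→n}`. -/
def classicalPolytope (m n d : ℕ) : Set (Fin m → Fin n → ℝ) :=
  convexHull ℝ (detStrategies m n d)

/-- if the last row of a row-stochastic matrix is a convex
combination of the other rows, it can be removed without changing membership
in the classical polytope. -/
theorem mem_classicalPolytope_iff_of_redundant_row
    (m n d : ℕ) (hm : 0 < m) (hn : 0 < n) (hd : 0 < d)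
    (p : Fin (m + 1) → Fin n → ℝ)
    (hpos : ∀ x y, 0 ≤ p x y) (hrow : ∀ x, ∑ y, p x y = 1)
    (μ : Fin m → ℝ) (hμ : ∀ x, 0 ≤ μ x) (hμ1 : ∑ x, μ x = 1)
    (hlast : p (Fin.last m) = ∑ x, μ x • p x.castSucc) :
    p ∈ classicalPolytope (m + 1) n d ↔
      (fun x : Fin m => p x.castSucc) ∈ classicalPolytope m n d := by
  constructor
  · intro hp
    rw [classicalPolytope, mem_convexHull_iff_exists_fintype] at hp ⊢
    obtain ⟨ι, hι, w, z, hw0, hw1, hz, hzp⟩ := hp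
    refine ⟨ι, hι, w, fun i x => z i x.castSucc, hw0, hw1, ?_, ?_⟩
    · intro i
      obtain ⟨g, hg, hgz⟩ := hz i
      refine ⟨fun x => g x.castSucc, le_trans (Finset.card_le_card ?_) hg,
        fun x y => hgz _ _⟩
      intro y hy
      simp only [Finset.mem_image, Finset.mem_univ, true_and] at hy ⊢
      obtain ⟨x, rfl⟩ := hy
      exact ⟨x.castSucc, rfl⟩
    · funext x y
      have h := congrFun (congrFun hzp x.castSucc) y
      simpa [Finset.sum_apply, Pi.smul_apply] using h
  · intro hp
    rw [classicalPolytope, mem_convexHull_iff_exists_fintype] at hp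
    obtain ⟨ι, hι, w, z, hw0, hw1, hz, hzp⟩ := hp
    choose G hGcard hGz using hz
    have hp' : ∀ x y, p x.castSucc y
        = ∑ i, w i * (if G i x = y then (1:ℝ) else 0) := by
      intro x y
      have h := congrFun (congrFun hzp x) y
      simp only [Finset.sum_apply, Pi.smul_apply, smul_eq_mul, hGz] at h
      exact h.symm
    rw [classicalPolytope, mem_convexHull_iff_exists_fintype]
    refine ⟨ι × Fin m, inferInstance, fun ix => w ix.1 * μ ix.2,
      fun ix (r : Fin (m+1)) y => if (Fin.snoc (G ix.1) (G ix.1 ix.2) : Fin (m+1) → Fin n) r = y then (1:ℝ) else 0,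
      fun ix => mul_nonneg (hw0 _) (hμ _), ?_, ?_, ?_⟩
    · rw [Fintype.sum_prod_type]
      simp [← Finset.mul_sum, hμ1, hw1]
    · rintro ⟨i, x⟩
      refine ⟨Fin.snoc (G i) (G i x), le_trans (Finset.card_le_card ?_)
        (hGcard i), fun _ _ => rfl⟩
      intro y hy
      simp only [Finset.mem_image, Finset.mem_univ, true_and] at hy ⊢
      obtain ⟨r, rfl⟩ := hy
      induction r using Fin.lastCases with
      | last => exact ⟨x, by simp⟩
      | cast j => exact ⟨j, by simp⟩
    · funext r y
      simp only [Finset.sum_apply, Pi.smul_apply, smul_eq_mul]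
      induction r using Fin.lastCases with
      | last =>
        have hl := congrFun hlast y
        simp only [Finset.sum_apply, Pi.smul_apply, smul_eq_mul] at hl
        rw [hl]
        simp only [Fin.snoc_last, Fintype.sum_prod_type_right]
        refine Finset.sum_congr rfl fun x _ => ?_
        rw [hp' x y, Finset.mul_sum]
        exact Finset.sum_congr rfl fun i _ => by ring
      | cast x0 =>
        simp only [Fin.snoc_castSucc, Fintype.sum_prod_type]
        rw [hp' x0 y]
        refine Finset.sum_congr rfl fun i _ => ?_
        rw [show (∑ x : Fin m, w i * μ x * if G i x0 = y then (1:ℝ) else 0)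
            = (∑ x : Fin m, μ x) * (w i * if G i x0 = y then (1:ℝ) else 0) by
          rw [Finset.sum_mul]; exact Finset.sum_congr rfl fun x _ => by ring, hμ1, one_mul]
end

section
/- The signaling dimension of the square bit equals two: the minimal natural number d such that for all positive integers m, n, every matrix in P_sq^{m→n} belongs to the classical polytope P_d^{m→n} is d = 2. -/
open Matrix Finset

noncomputable section

/-- Extremal squit states. -/
def sqState : Fin 4 → Fin 3 → ℝ :=
  ![![1, 0, 1], ![0, 1, 1], ![-1, 0, 1], ![0, -1, 1]]

/-- Extremal normalized squit effects. -/
def sqEffect : Fin 4 → Fin 3 → ℝ :=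
  ![![1, 1, 1], ![-1, 1, 1], ![-1, -1, 1], ![1, -1, 1]]

/-- The unit effect of the squit. -/
def sqUnit : Fin 3 → ℝ := ![0, 0, 1]

/-- The `m`-input/`n`-output correlations achievable by the squit with shared
randomness. -/
def Psq (m n : ℕ) : Set (Fin m → Fin n → ℝ) :=
  {p | ∃ (L : ℕ) (q : Fin L → ℝ) (st : Fin m → Fin L → Fin 3 → ℝ)
        (ms : Fin L → Fin n → Fin 3 → ℝ),
      (∀ l, 0 ≤ q l) ∧ (∑ l, q l = 1) ∧
      (∀ x l, st x l ∈ convexHull ℝ (Set.range sqState)) ∧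
      (∀ l, (∀ y, ∃ t : ℝ, 0 ≤ t ∧ ∃ c ∈ convexHull ℝ (Set.range sqEffect),
                ms l y = t • c) ∧
            ∑ y, ms l y = sqUnit) ∧
      (∀ x y, p x y = ∑ l, q l * (st x l ⬝ᵥ ms l y))}

/-! A squit correlation is a mixture over the shared randomness of matrices `ω_x ⬝ᵥ f_y`, and
`P_2` is convex and stable under relabelling inputs, so it suffices to treat the four extremal
states, i.e. the `4 × n` matrix `r i y = ωᵢ ⬝ᵥ f_y`. Its rows are probability vectors with
`r₀ + r₂ = r₁ + r₃` (because `ω₀ + ω₂ = ω₁ + ω₃`), and with `u = (r₀ - r₁)⁺` it splits into the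
patterns `(r₀ - u, r₀ - u, r₃ - u, r₃ - u)` and `(u, u + r₁ - r₀, u + r₁ - r₀, u)`, each having
only two distinct rows, hence each a multiple of a point of `P_2`. Conversely, two antipodal
states realise the identity `2 × 2` channel, which is not in `P_1`: points of `P_1` have equal
rows. -/

section ClassicalPolytope

open scoped Pointwise

variable {m n d : ℕ}

lemma convex_classicalPolytope : Convex ℝ (classicalPolytope m n d) :=
  convex_convexHull ℝ _

lemma classicalPolytope_mono {d' : ℕ} (h : d ≤ d') :
    classicalPolytope m n d ⊆ classicalPolytope m n d' :=
  convexHull_mono fun _ ⟨g, hg, hv⟩ => ⟨g, hg.trans h, hv⟩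

lemma classicalPolytope_one_rows_eq {p : Fin m → Fin n → ℝ} (hp : p ∈ classicalPolytope m n 1)
    (x x' : Fin m) : p x = p x' := by
  refine convexHull_min (t := {p | p x = p x'}) ?_ ?_ hp
  · rintro v ⟨g, hg, hv⟩
    have hgx : g x = g x' :=
      card_le_one.mp hg _ (mem_image_of_mem g (mem_univ x)) _ (mem_image_of_mem g (mem_univ x'))
    funext y
    simp [hv, hgx]
  · intro p hp q hq a b _ _ _
    simp only [Set.mem_ofPred_eq, Pi.add_apply, Pi.smul_apply] at hp hq ⊢
    rw [hp, hq]

lemma mem_classicalPolytope_of_stdSimplex_of_le {p : Fin m → Fin n → ℝ} (hm : m ≤ d)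
    (hp : ∀ x, p x ∈ stdSimplex ℝ (Fin n)) : p ∈ classicalPolytope m n d := by
  have hp' : p ∈ convexHull ℝ (Set.univ.pi fun _ =>
      Set.range fun y y' : Fin n => if y = y' then (1 : ℝ) else 0) := by
    simpa [convexHull_basis_eq_stdSimplex] using hp
  refine convexHull_mono ?_ hp'
  intro v hv
  choose g hg using fun x => hv x (Set.mem_univ x)
  exact ⟨g, card_image_le.trans (by simpa using hm), fun x y => (congrFun (hg x) y).symm⟩

lemma comp_mem_classicalPolytope {k : ℕ} {r : Fin k → Fin n → ℝ}
    (hr : r ∈ classicalPolytope k n d) (σ : Fin m → Fin k) :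
    (fun x => r (σ x)) ∈ classicalPolytope m n d := by
  let L : (Fin k → Fin n → ℝ) →ₗ[ℝ] Fin m → Fin n → ℝ := LinearMap.funLeft ℝ _ σ
  have hLr : L r ∈ convexHull ℝ (L '' detStrategies k n d) :=
    L.image_convexHull _ ▸ Set.mem_image_of_mem L hr
  refine convexHull_mono ?_ hLr
  rintro _ ⟨v, ⟨g, hg, hv⟩, rfl⟩
  refine ⟨g ∘ σ, (card_le_card ?_).trans hg, fun x y => hv (σ x) y⟩
  rw [← image_image]
  exact image_subset_image (subset_univ _)

lemma comp_mem_smul_classicalPolytope_two (hn : 0 < n) {s : Fin 2 → Fin n → ℝ} {t : ℝ}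
    (hs : ∀ j y, 0 ≤ s j y) (hst : ∀ j, ∑ y, s j y = t) (h : Fin m → Fin 2) :
    (fun x => s (h x)) ∈ t • classicalPolytope m n 2 := by
  rcases (hst 0 ▸ sum_nonneg fun y _ => hs 0 y : 0 ≤ t).eq_or_lt with rfl | ht
  · have hs0 : s = 0 := funext fun j => funext fun y =>
      (sum_eq_zero_iff_of_nonneg fun y _ => hs j y).1 (hst j) y (mem_univ y)
    -- `0 • S` is empty when `S` is, so even here a point of `P_2` is needed.
    have hconst : (fun _ y => if (⟨0, hn⟩ : Fin n) = y then 1 else 0) ∈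
        classicalPolytope m n 2 :=
      subset_convexHull ℝ _ ⟨fun _ => ⟨0, hn⟩,
        (card_le_one.2 fun _ ha _ hb => by simp_all).trans one_le_two, fun _ _ => rfl⟩
    exact ⟨_, hconst, by ext; simp [hs0]⟩
  · have hs' : t⁻¹ • s ∈ classicalPolytope 2 n 2 :=
      mem_classicalPolytope_of_stdSimplex_of_le le_rfl fun j =>
        ⟨fun y => mul_nonneg (inv_nonneg.2 ht.le) (hs j y), by
          simp [← mul_sum, hst j, ht.ne']⟩
    convert Set.smul_mem_smul_set (a := t) (comp_mem_classicalPolytope hs' h) using 1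
    ext x y
    simp [ht.ne']

lemma mem_classicalPolytope_two_of_balanced {r : Fin 4 → Fin n → ℝ}
    (hr : ∀ i, r i ∈ stdSimplex ℝ (Fin n)) (hbal : ∀ y, r 0 y + r 2 y = r 1 y + r 3 y) :
    r ∈ classicalPolytope 4 n 2 := by
  have hn : 0 < n := Nat.pos_of_ne_zero (by rintro rfl; simpa using (hr 0).2)
  have hnonneg := fun i => (hr i).1
  set u : Fin n → ℝ := fun y => max (r 0 y - r 1 y) 0
  have hu0 : ∀ y, 0 ≤ u y := fun y => le_max_right _ _
  have hu1 : ∀ y, r 0 y - r 1 y ≤ u y := fun y => le_max_left _ _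
  have hu_le : ∀ y, u y ≤ r 0 y ∧ u y ≤ r 3 y := fun y =>
    ⟨max_le (by linarith [hnonneg 1 y]) (hnonneg 0 y),
      max_le (by linarith [hnonneg 2 y, hbal y]) (hnonneg 3 y)⟩
  have hsum : ∀ i, ∑ y, r i y = 1 := fun i => (hr i).2
  have hA := comp_mem_smul_classicalPolytope_two hn (s := ![r 0 - u, r 3 - u])
    (t := 1 - ∑ y, u y) (by simp [Fin.forall_fin_two, fun y => (hu_le y).1, fun y => (hu_le y).2])
    (by simp [Fin.forall_fin_two, sum_sub_distrib, hsum]) ![0, 0, 1, 1]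
  have hB := comp_mem_smul_classicalPolytope_two hn (s := ![u, u + r 1 - r 0])
    (t := ∑ y, u y) (by simp [Fin.forall_fin_two, hu0]; intro y; linarith [hu1 y])
    (by simp [Fin.forall_fin_two, sum_sub_distrib, sum_add_distrib, hsum]) ![0, 1, 1, 0]
  have hsplit : (1 - ∑ y, u y) • classicalPolytope 4 n 2 + (∑ y, u y) • classicalPolytope 4 n 2 =
      classicalPolytope 4 n 2 := by
    rw [← convex_classicalPolytope.add_smul
      (sub_nonneg.2 ((sum_le_sum fun y _ => (hu_le y).1).trans (hsum 0).le))
      (sum_nonneg fun y _ => hu0 y : 0 ≤ ∑ y, u y), sub_add_cancel, one_smul]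
  convert hsplit ▸ Set.add_mem_add hA hB using 1
  ext i y
  fin_cases i <;> simp
  linarith [hbal y]

lemma dotProduct_mem_classicalPolytope_of_mem_convexHull {k D : ℕ} {v : Fin k → Fin D → ℝ}
    {f : Fin n → Fin D → ℝ}
    (hv : (fun i y => v i ⬝ᵥ f y) ∈ classicalPolytope k n d) {st : Fin m → Fin D → ℝ}
    (hst : ∀ x, st x ∈ convexHull ℝ (Set.range v)) :
    (fun x y => st x ⬝ᵥ f y) ∈ classicalPolytope m n d := by
  have hlin : IsLinearMap ℝ fun (st : Fin m → Fin D → ℝ) x y => st x ⬝ᵥ f y :=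
    ⟨fun _ _ => by ext; simp [add_dotProduct], fun _ _ => by ext; simp [smul_dotProduct]⟩
  have hst' : st ∈ convexHull ℝ (Set.univ.pi fun _ => Set.range v) := by
    rw [convexHull_pi]
    exact fun x _ => hst x
  refine convexHull_min ?_ convex_classicalPolytope
    (hlin.image_convexHull _ ▸ Set.mem_image_of_mem _ hst')
  rintro _ ⟨w, hw, rfl⟩
  choose σ hσ using fun x => hw x (Set.mem_univ x)
  simpa [← hσ] using comp_mem_classicalPolytope hv σ

end ClassicalPolytope

lemma sqState_dotProduct_nonneg (i : Fin 4) {c : Fin 3 → ℝ}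
    (hc : c ∈ convexHull ℝ (Set.range sqEffect)) : 0 ≤ sqState i ⬝ᵥ c := by
  refine convexHull_min ?_ (convex_halfSpace_ge (f := (sqState i ⬝ᵥ ·))
    ⟨dotProduct_add _, fun _ _ => dotProduct_smul _ _ _⟩ 0) hc
  rintro _ ⟨j, rfl⟩
  fin_cases i <;> fin_cases j <;>
    simp [sqState, sqEffect, dotProduct, Fin.sum_univ_three,
      Matrix.cons_val_two, Matrix.vecHead, Matrix.vecTail]

lemma sqState_dotProduct_mem_classicalPolytope_two {n : ℕ} {f : Fin n → Fin 3 → ℝ}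
    (hf : ∀ y, ∃ t : ℝ, 0 ≤ t ∧ ∃ c ∈ convexHull ℝ (Set.range sqEffect), f y = t • c)
    (hunit : ∑ y, f y = sqUnit) :
    (fun i y => sqState i ⬝ᵥ f y) ∈ classicalPolytope 4 n 2 := by
  refine mem_classicalPolytope_two_of_balanced (fun i => ⟨fun y => ?_, ?_⟩) fun y => ?_
  · obtain ⟨t, ht, c, hc, hfy⟩ := hf y
    simp only [hfy, dotProduct_smul, smul_eq_mul]
    exact mul_nonneg ht (sqState_dotProduct_nonneg i hc)
  · rw [← dotProduct_sum, hunit]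
    fin_cases i <;>
      simp [sqState, sqUnit, dotProduct, Fin.sum_univ_three, Matrix.cons_val_two, Matrix.vecHead,
        Matrix.vecTail]
  · have hantipodal : sqState 0 + sqState 2 = sqState 1 + sqState 3 := by
      ext j
      fin_cases j <;> simp [sqState]
    simp only [← add_dotProduct, hantipodal]

theorem Psq_subset_classicalPolytope_two (m n : ℕ) : Psq m n ⊆ classicalPolytope m n 2 := by
  rintro p ⟨L, q, st, ms, hq0, hq1, hst, hms, hp⟩
  have hp' : p = ∑ l, q l • fun x y => st x l ⬝ᵥ ms l y := by
    ext x y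
    simp [hp, Finset.sum_apply]
  rw [hp']
  exact convex_classicalPolytope.sum_mem (fun l _ => hq0 l) hq1 fun l _ =>
    dotProduct_mem_classicalPolytope_of_mem_convexHull
      (sqState_dotProduct_mem_classicalPolytope_two (hms l).1 (hms l).2) fun x => hst x l

lemma id_mem_Psq : (fun x y : Fin 2 => if x = y then (1 : ℝ) else 0) ∈ Psq 2 2 := by
  refine ⟨1, fun _ => 1, fun x _ => ![sqState 0, sqState 2] x,
    fun _ y => (1 / 2 : ℝ) • ![sqEffect 0, sqEffect 2] y, fun _ => zero_le_one, by simp,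
    fun x _ => ?_, fun _ => ⟨fun y => ⟨1 / 2, by norm_num, _, ?_, rfl⟩, ?_⟩, fun x y => ?_⟩
  · fin_cases x
    exacts [subset_convexHull ℝ _ ⟨0, rfl⟩, subset_convexHull ℝ _ ⟨2, rfl⟩]
  · fin_cases y
    exacts [subset_convexHull ℝ _ ⟨0, rfl⟩, subset_convexHull ℝ _ ⟨2, rfl⟩]
  · ext j
    fin_cases j <;> norm_num [sqEffect, sqUnit, Matrix.cons_val_two, Matrix.vecHead, Matrix.vecTail]
  · fin_cases x <;> fin_cases y <;>
      norm_num [sqState, sqEffect, dotProduct, Fin.sum_univ_three,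
        Matrix.cons_val_two, Matrix.vecHead, Matrix.vecTail]

/-- the signaling dimension of the square bit is two. -/
theorem signaling_dimension_squit_eq_two :
    IsLeast {d : ℕ | ∀ m n : ℕ, 0 < m → 0 < n →
      Psq m n ⊆ classicalPolytope m n d} 2 := by
  refine ⟨fun m n _ _ => Psq_subset_classicalPolytope_two m n, fun d hd => ?_⟩
  by_contra! hd2
  have hid := classicalPolytope_mono (by omega : d ≤ 1) (hd 2 2 two_pos two_pos id_mem_Psq)
  simpa using congrFun (classicalPolytope_one_rows_eq hid 0 1) 0

end
end

section
/- The set {e ∈ ℝ^3 : e·ω_k ≥ 0 for all k ∈ {0,1,2,3} and e₃ = 1}, where ω₀=(1,0,1), ω₁=(0,1,1), ω₂=(−1,0,1), ω₃=(0,−1,1), equals the convex hull of the four points e₀=(1,1,1), e₁=(−1,1,1), e₂=(−1,−1,1), e₃=(1,−1,1). -/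
/-!
The dual constraints `0 ≤ e ⬝ᵥ ωₖ` read `|e₀| ≤ 1` and `|e₁| ≤ 1`, so with `e₂ = 1` the
dual polytope is the box `[-1, 1] × [-1, 1] × {1}`, and the four effects are exactly its
vertices. Convex hulls commute with products and the convex hull of `{a, b}` in an ordered
field is `[a, b]`, so the convex hull of the vertex set of a box is the box itself.
-/

open Matrix Finset

noncomputable section

theorem convexHull_univ_pi_pair {𝕜 ι : Type*} [Finite ι] [Field 𝕜] [LinearOrder 𝕜]
    [IsStrictOrderedRing 𝕜] {a b : ι → 𝕜} (hab : a ≤ b) :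
    convexHull 𝕜 (Set.univ.pi fun i ↦ {a i, b i}) = Set.Icc a b := by
  rw [convexHull_pi, ← Set.pi_univ_Icc]
  exact congrArg _ <| funext fun i ↦ by rw [convexHull_pair, segment_eq_Icc (hab i)]

theorem range_sqEffect :
    Set.range sqEffect = Set.univ.pi fun i ↦ {![-1, -1, 1] i, (1 : Fin 3 → ℝ) i} := by
  ext e
  simp only [Set.mem_range, Set.mem_univ_pi, Set.mem_insert_iff, Set.mem_singleton_iff]
  constructor
  · rintro ⟨k, rfl⟩ i
    fin_cases k <;> fin_cases i <;> simp [sqEffect]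
  · intro he
    have h2 : e 2 = 1 := by simpa using he 2
    have eq_of_coords : ∀ x y : ℝ, e 0 = x → e 1 = y → e = ![x, y, 1] := fun x y h0 h1 ↦ by
      ext i; fin_cases i <;> simp [h0, h1, h2]
    rcases he 0 with h0 | h0 <;> rcases he 1 with h1 | h1 <;>
      simp only [Fin.isValue, Pi.one_apply, cons_val_zero, cons_val_one] at h0 h1
    · exact ⟨2, (eq_of_coords _ _ h0 h1).symm⟩
    · exact ⟨1, (eq_of_coords _ _ h0 h1).symm⟩
    · exact ⟨3, (eq_of_coords _ _ h0 h1).symm⟩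
    · exact ⟨0, (eq_of_coords _ _ h0 h1).symm⟩

theorem dotProduct_sqState (e : Fin 3 → ℝ) (k : Fin 4) :
    e ⬝ᵥ sqState k = e 2 + ![e 0, e 1, -e 0, -e 1] k := by
  fin_cases k <;> simp [sqState, dotProduct, Fin.sum_univ_three] <;> ring

theorem squit_dual_set_eq_Icc :
    {e : Fin 3 → ℝ | (∀ k : Fin 4, 0 ≤ e ⬝ᵥ sqState k) ∧ e 2 = 1} = Set.Icc ![-1, -1, 1] 1 := by
  ext e
  simp only [Set.mem_ofPred_eq, Set.mem_Icc, Pi.le_def, Fin.forall_fin_succ, dotProduct_sqState,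
    IsEmpty.forall_iff, Fin.isValue, Fin.succ_zero_eq_one, Fin.succ_one_eq_two, cons_val_zero,
    cons_val_succ, Pi.one_apply, le_add_neg_iff_add_le, zero_add, and_true]
  constructor
  · rintro ⟨⟨h0, h1, h2, h3⟩, he⟩
    refine ⟨⟨?_, ?_, ?_⟩, ?_, ?_, ?_⟩ <;> linarith
  · rintro ⟨⟨h0, h1, h2⟩, h3, h4, h5⟩
    refine ⟨⟨?_, ?_, ?_, ?_⟩, ?_⟩ <;> linarith

/-- the normalized dual effect polytope of the squit is the
convex hull of the four extremal normalized effects. -/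
theorem squit_dual_effects_eq_convexHull :
    {e : Fin 3 → ℝ | (∀ k : Fin 4, 0 ≤ e ⬝ᵥ sqState k) ∧ e 2 = 1}
      = convexHull ℝ (Set.range sqEffect) := by
  have corners_le : (![-1, -1, 1] : Fin 3 → ℝ) ≤ 1 := fun i ↦ by fin_cases i <;> norm_num
  rw [squit_dual_set_eq_Icc, range_sqEffect, convexHull_univ_pi_pair corners_le]

end
end
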